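/- Let k ≥ 1 and let q₀, q₁ : I × (0,∞) → ℝᵏ be continuously differentiable (I an open interval), and let A₀ : I × (0,∞) → ℝ^{k×k} be a continuous matrix-valued function which is skew-symmetric at every point (A₀ᵀ = −A₀). Assume the gauged wave map system: ∂_t q₀ + A₀ q₀ − (1/r) ∂_r (r q₁) = 0 and ∂_r q₀ = ∂_t q₁ + A₀ q₁ at every point. Then for every α ∈ ℝ the following divergence identity holds at every (t,r) with r > 0: −∂_t ( r^{1−α} q₀ · q₁ ) + ∂_r ( (1/2) r^{1−α} (|q₀|² + |q₁|²) ) − (1/2)(1−α) r^{−α} |q₀|² + (1/2)(1+α) r^{−α} |q₁|² = 0. -/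

import Mathlib

/-!
Dotting the first equation with `q₁` and the second with `q₀`, the connection terms cancel
by skew-symmetry of `A₀`, leaving the local balance law
`∂_t(q₀·q₁) = ½ ∂_r(|q₀|² + |q₁|²) + r⁻¹|q₁|²`.
Multiplying by `r^{1-α}` and moving the weight inside `∂_r` costs
`½(1-α) r^{-α}(|q₀|² + |q₁|²)`, which together with `r^{-α}|q₁|²` gives the identity.
-/

open MeasureTheory Set Matrix

/-- Partial derivative in the first (time) variable. -/
noncomputable def pderivT {E : Type*} [NormedAddCommGroup E] [NormedSpace ℝ E]
    (f : ℝ → ℝ → E) (t r : ℝ) : E :=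
  deriv (fun s => f s r) t

/-- Partial derivative in the second (radial) variable. -/
noncomputable def pderivR {E : Type*} [NormedAddCommGroup E] [NormedSpace ℝ E]
    (f : ℝ → ℝ → E) (t r : ℝ) : E :=
  deriv (f t) r

lemma HasDerivAt.dotProduct {ι : Type*} [Fintype ι] {f g : ℝ → ι → ℝ} {f' g' : ι → ℝ} {x : ℝ}
    (hf : HasDerivAt f f' x) (hg : HasDerivAt g g' x) :
    HasDerivAt (fun s => f s ⬝ᵥ g s) (f' ⬝ᵥ g x + f x ⬝ᵥ g') x := by
  have h := HasDerivAt.fun_sum (u := Finset.univ) fun i _ =>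
    (hasDerivAt_pi.1 hf i).fun_mul (hasDerivAt_pi.1 hg i)
  simpa only [_root_.dotProduct, Finset.sum_add_distrib] using h

lemma Matrix.dotProduct_mulVec_of_transpose_eq_neg {ι : Type*} [Fintype ι]
    {A : Matrix ι ι ℝ} (hA : Aᵀ = -A) (x y : ι → ℝ) :
    x ⬝ᵥ (A *ᵥ y) = -((A *ᵥ x) ⬝ᵥ y) := by
  rw [dotProduct_mulVec, ← mulVec_transpose, hA, neg_mulVec, neg_dotProduct]

section PartialDerivatives

variable {E : Type*} [NormedAddCommGroup E] [NormedSpace ℝ E] {f : ℝ → ℝ → E} {t r : ℝ}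

lemma hasDerivAt_pderivT (hf : DifferentiableAt ℝ (fun p : ℝ × ℝ => f p.1 p.2) (t, r)) :
    HasDerivAt (fun s => f s r) (pderivT f t r) t := by
  have h := hf.comp t (by fun_prop : DifferentiableAt ℝ (fun s : ℝ => (s, r)) t)
  exact (show DifferentiableAt ℝ (fun s => f s r) t from h).hasDerivAt

lemma hasDerivAt_pderivR (hf : DifferentiableAt ℝ (fun p : ℝ × ℝ => f p.1 p.2) (t, r)) :
    HasDerivAt (f t) (pderivR f t r) r := by
  have h := hf.comp r (by fun_prop : DifferentiableAt ℝ (fun r' : ℝ => (t, r')) r)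
  exact (show DifferentiableAt ℝ (f t) r from h).hasDerivAt

end PartialDerivatives

/-- `T₀, T₁` and `R₀, R₁` stand for the `t`- and `r`-derivatives of `q₀, q₁` at one point. -/
lemma momentum_balance {ι : Type*} [Fintype ι] {A : Matrix ι ι ℝ} (hA : Aᵀ = -A)
    {r : ℝ} (hr : r ≠ 0) {q₀ q₁ T₀ T₁ R₀ R₁ : ι → ℝ}
    (h₀ : T₀ + A *ᵥ q₀ - r⁻¹ • (r • R₁ + q₁) = 0) (h₁ : R₀ = T₁ + A *ᵥ q₁) :
    T₀ ⬝ᵥ q₁ + q₀ ⬝ᵥ T₁ = R₀ ⬝ᵥ q₀ + R₁ ⬝ᵥ q₁ + r⁻¹ * (q₁ ⬝ᵥ q₁) := by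
  have hT₀ : T₀ = R₁ + r⁻¹ • q₁ - A *ᵥ q₀ := by
    rw [smul_add, smul_smul, inv_mul_cancel₀ hr, one_smul] at h₀
    rw [← sub_eq_zero, ← h₀]; abel
  rw [hT₀, eq_sub_of_add_eq h₁.symm, sub_dotProduct, add_dotProduct, dotProduct_sub,
    dotProduct_mulVec_of_transpose_eq_neg hA, smul_dotProduct, smul_eq_mul,
    dotProduct_comm q₀ R₀]
  ring

lemma weighted_momentum_balance (M N : ℝ → ℝ → ℝ) {t r M' N' Q₀ Q₁ : ℝ} (hr : 0 < r)
    (hM : HasDerivAt (fun s => M s r) M' t) (hN : HasDerivAt (N t) N' r)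
    (hbal : M' = (1 / 2) * N' + r⁻¹ * Q₁) (hN_eq : N t r = Q₀ + Q₁) (α : ℝ) :
    -(pderivT (fun t' r' => r' ^ (1 - α) * M t' r') t r)
      + pderivR (fun t' r' => (1 / 2) * r' ^ (1 - α) * N t' r') t r
      - (1 / 2) * (1 - α) * r ^ (-α) * Q₀ + (1 / 2) * (1 + α) * r ^ (-α) * Q₁ = 0 := by
  have hweight : HasDerivAt (fun x : ℝ => (1 / 2) * x ^ (1 - α))
      ((1 / 2) * ((1 - α) * r ^ (1 - α - 1))) r :=
    (Real.hasDerivAt_rpow_const (Or.inl hr.ne')).const_mul _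
  have hT : pderivT (fun t' r' => r' ^ (1 - α) * M t' r') t r = r ^ (1 - α) * M' :=
    (hM.const_mul _).deriv
  have hR : pderivR (fun t' r' => (1 / 2) * r' ^ (1 - α) * N t' r') t r
      = (1 / 2) * ((1 - α) * r ^ (1 - α - 1)) * N t r + (1 / 2) * r ^ (1 - α) * N' :=
    (hweight.mul hN).deriv
  have hpow : r ^ (1 - α) = r * r ^ (-α) := by
    rw [sub_eq_add_neg, Real.rpow_add hr, Real.rpow_one]
  rw [hT, hR, hbal, hN_eq, sub_sub_cancel_left, hpow]
  field_simp
  ring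

theorem stmt_7_general (k : ℕ) (a b : ℝ)
    (q₀ q₁ : ℝ → ℝ → (Fin k → ℝ))
    (A₀ : ℝ → ℝ → Matrix (Fin k) (Fin k) ℝ)
    (hq₀ : ContDiffOn ℝ 1 (fun p : ℝ × ℝ => q₀ p.1 p.2) (Ioo a b ×ˢ Ioi 0))
    (hq₁ : ContDiffOn ℝ 1 (fun p : ℝ × ℝ => q₁ p.1 p.2) (Ioo a b ×ˢ Ioi 0))
    (hskew : ∀ t ∈ Ioo a b, ∀ r : ℝ, 0 < r → (A₀ t r)ᵀ = -(A₀ t r))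
    (heq1 : ∀ t ∈ Ioo a b, ∀ r : ℝ, 0 < r →
      pderivT q₀ t r + (A₀ t r) *ᵥ (q₀ t r)
        - r⁻¹ • pderivR (fun t' r' => r' • q₁ t' r') t r = 0)
    (heq2 : ∀ t ∈ Ioo a b, ∀ r : ℝ, 0 < r →
      pderivR q₀ t r = pderivT q₁ t r + (A₀ t r) *ᵥ (q₁ t r)) :
    ∀ α : ℝ, ∀ t ∈ Ioo a b, ∀ r : ℝ, 0 < r →
      -(pderivT (fun t' r' => r' ^ (1 - α) * (q₀ t' r' ⬝ᵥ q₁ t' r')) t r)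
        + pderivR (fun t' r' =>
            (1 / 2) * r' ^ (1 - α) * (q₀ t' r' ⬝ᵥ q₀ t' r' + q₁ t' r' ⬝ᵥ q₁ t' r')) t r
        - (1 / 2) * (1 - α) * r ^ (-α) * (q₀ t r ⬝ᵥ q₀ t r)
        + (1 / 2) * (1 + α) * r ^ (-α) * (q₁ t r ⬝ᵥ q₁ t r) = 0 := by
  intro α t ht r hr
  have hnhds : Ioo a b ×ˢ Ioi 0 ∈ nhds (t, r) := (isOpen_Ioo.prod isOpen_Ioi).mem_nhds ⟨ht, hr⟩
  have hd₀ := (hq₀.differentiableOn one_ne_zero).differentiableAt hnhds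
  have hd₁ := (hq₁.differentiableOn one_ne_zero).differentiableAt hnhds
  have hrq₁ : pderivR (fun t' r' => r' • q₁ t' r') t r = r • pderivR q₁ t r + q₁ t r := by
    simpa only [pderivR, one_smul] using
      ((hasDerivAt_id' r).fun_smul (hasDerivAt_pderivR hd₁)).deriv
  have hbal := momentum_balance (hskew t ht r hr) hr.ne' (hrq₁ ▸ heq1 t ht r hr) (heq2 t ht r hr)
  refine weighted_momentum_balance (fun t' r' => q₀ t' r' ⬝ᵥ q₁ t' r')
    (fun t' r' => q₀ t' r' ⬝ᵥ q₀ t' r' + q₁ t' r' ⬝ᵥ q₁ t' r') hr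
    ((hasDerivAt_pderivT hd₀).dotProduct (hasDerivAt_pderivT hd₁))
    (((hasDerivAt_pderivR hd₀).dotProduct (hasDerivAt_pderivR hd₀)).add
      ((hasDerivAt_pderivR hd₁).dotProduct (hasDerivAt_pderivR hd₁))) ?_ rfl α
  rw [hbal, dotProduct_comm (q₀ t r), dotProduct_comm (q₁ t r) (pderivR q₁ t r)]
  ring

/-- The divergence identity (2.19) for the gauged radially symmetric wave map
system: with `A₀` skew-symmetric,
`−∂_t(r^{1−α} q₀·q₁) + ∂_r((1/2) r^{1−α}(|q₀|²+|q₁|²))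
  − (1/2)(1−α) r^{−α}|q₀|² + (1/2)(1+α) r^{−α}|q₁|² = 0`. -/
theorem stmt_7 (k : ℕ) (hk : 1 ≤ k) (a b : ℝ)
    (q₀ q₁ : ℝ → ℝ → (Fin k → ℝ))
    (A₀ : ℝ → ℝ → Matrix (Fin k) (Fin k) ℝ)
    (hq₀ : ContDiffOn ℝ 1 (fun p : ℝ × ℝ => q₀ p.1 p.2) (Ioo a b ×ˢ Ioi 0))
    (hq₁ : ContDiffOn ℝ 1 (fun p : ℝ × ℝ => q₁ p.1 p.2) (Ioo a b ×ˢ Ioi 0))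
    (hA₀ : ContinuousOn (fun p : ℝ × ℝ => A₀ p.1 p.2) (Ioo a b ×ˢ Ioi 0))
    (hskew : ∀ t ∈ Ioo a b, ∀ r : ℝ, 0 < r → (A₀ t r)ᵀ = -(A₀ t r))
    (heq1 : ∀ t ∈ Ioo a b, ∀ r : ℝ, 0 < r →
      pderivT q₀ t r + (A₀ t r) *ᵥ (q₀ t r)
        - r⁻¹ • pderivR (fun t' r' => r' • q₁ t' r') t r = 0)
    (heq2 : ∀ t ∈ Ioo a b, ∀ r : ℝ, 0 < r →
      pderivR q₀ t r = pderivT q₁ t r + (A₀ t r) *ᵥ (q₁ t r)) :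
    ∀ α : ℝ, ∀ t ∈ Ioo a b, ∀ r : ℝ, 0 < r →
      -(pderivT (fun t' r' => r' ^ (1 - α) * (q₀ t' r' ⬝ᵥ q₁ t' r')) t r)
        + pderivR (fun t' r' =>
            (1 / 2) * r' ^ (1 - α) * (q₀ t' r' ⬝ᵥ q₀ t' r' + q₁ t' r' ⬝ᵥ q₁ t' r')) t r
        - (1 / 2) * (1 - α) * r ^ (-α) * (q₀ t r ⬝ᵥ q₀ t r)
        + (1 / 2) * (1 + α) * r ^ (-α) * (q₁ t r ⬝ᵥ q₁ t r) = 0 :=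
  stmt_7_general k a b q₀ q₁ A₀ hq₀ hq₁ hskew heq1 heq2
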